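/- For every n ≥ 2 and every i with 2 ≤ i ≤ n, the degrees of consecutive vertices in the underlying undirected graph of J_n(1) differ by at most one: |d_n(i) − d_n(i−1)| ≤ 1. -/

import Mathlib

/-!
Since `f j + d⁻(j) = j`, counting the out-neighbours of `v_j` inside `J_n(1)` gives
`d_n(j) = min j (d⁻(j) + (n - j))`. From `j` to `j + 1` only `v_j` can join the in-neighbours,
so `d⁻` grows by at most one; hence `f = j - d⁻` is monotone, `i ↦ i + f i` is injective, at most
one in-neighbour is lost, and `d⁻` is nondecreasing. So both arguments of the `min`, and with them
`d_n`, move by at most one.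
-/

/-- The Jaco out-degree function `f`: `f 0 = 0` and, for `n ≥ 1`,
`f n = n - #{k : 1 ≤ k < n ∧ k + f k ≥ n}` (the out-degree of `v_n` in `J_∞(1)`). -/
def jacoF : ℕ → ℕ
  | 0 => 0
  | n + 1 =>
    (n + 1) - ((Finset.range (n + 1)).attach.filter
      (fun a => 1 ≤ a.1 ∧ n + 1 ≤ a.1 + jacoF a.1)).card
  decreasing_by all_goals exact Finset.mem_range.mp a.2

/-- The in-degree `d⁻(j) = #{i : 1 ≤ i < j ∧ j ≤ i + f i}` of `v_j` in `J_∞(1)`. -/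
def jacoDin (j : ℕ) : ℕ := ((Finset.Ico 1 j).filter (fun i => j ≤ i + jacoF i)).card

/-- The degree `d_n(j) = d⁻(j) + #{k : j < k ≤ n ∧ k ≤ j + f j}` of `v_j` in the
underlying undirected graph of the finite Jaco graph `J_n(1)`. -/
def jacoDeg (n j : ℕ) : ℕ :=
  jacoDin j + ((Finset.Ioc j n).filter (fun k => k ≤ j + jacoF j)).card

/-- The maximum degree `Δ(J_n(1)) = max_{1 ≤ j ≤ n} d_n(j)`. -/
def jacoDelta (n : ℕ) : ℕ := (Finset.Icc 1 n).sup (jacoDeg n)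

/-- The Jaconian set `𝕁(J_n(1)) = {j : 1 ≤ j ≤ n ∧ d_n(j) = Δ(J_n(1))}`. -/
def jacoJ (n : ℕ) : Finset ℕ := (Finset.Icc 1 n).filter (fun j => jacoDeg n j = jacoDelta n)


lemma jacoDin_le_sub_one (j : ℕ) : jacoDin j ≤ j - 1 :=
  (Finset.card_filter_le _ _).trans (Nat.card_Ico 1 j).le

lemma jacoF_add_jacoDin (j : ℕ) : jacoF j + jacoDin j = j := by
  cases j with
  | zero => simp [jacoF, jacoDin]
  | succ n =>
    have hcard : ((Finset.range (n + 1)).attach.filter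
        (fun a => 1 ≤ a.1 ∧ n + 1 ≤ a.1 + jacoF a.1)).card = jacoDin (n + 1) := by
      rw [Finset.filter_attach (fun a => 1 ≤ a ∧ n + 1 ≤ a + jacoF a), Finset.card_map,
        Finset.card_attach, jacoDin]
      congr 1
      ext a
      simp only [Finset.mem_filter, Finset.mem_range, Finset.mem_Ico]
      omega
    have := jacoDin_le_sub_one (n + 1)
    rw [jacoF, hcard]
    omega

lemma one_le_jacoF {j : ℕ} (hj : 1 ≤ j) : 1 ≤ jacoF j := by
  have := jacoF_add_jacoDin j
  have := jacoDin_le_sub_one j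
  omega

lemma jacoDin_succ_le (j : ℕ) : jacoDin (j + 1) ≤ jacoDin j + 1 := by
  have hsub : (Finset.Ico 1 (j + 1)).filter (fun i => j + 1 ≤ i + jacoF i) ⊆
      insert j ((Finset.Ico 1 j).filter (fun i => j ≤ i + jacoF i)) := by
    intro x hx
    simp only [Finset.mem_insert, Finset.mem_filter, Finset.mem_Ico] at hx ⊢
    omega
  exact (Finset.card_le_card hsub).trans (Finset.card_insert_le _ _)

lemma jacoF_mono : Monotone jacoF := by
  refine monotone_nat_of_le_succ fun j => ?_
  have := jacoF_add_jacoDin j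
  have := jacoF_add_jacoDin (j + 1)
  have := jacoDin_succ_le j
  omega

lemma strictMono_add_jacoF : StrictMono fun i => i + jacoF i :=
  strictMono_nat_of_lt_succ fun i => by
    have := jacoF_mono (Nat.le_add_right i 1)
    omega

-- Passing from `j` to `j + 1`, the only in-neighbour lost is the unique `i` with `i + f i = j`
-- (if any), and `j` itself is gained since `f j ≥ 1`: send the former to the latter.
lemma jacoDin_mono : Monotone jacoDin := by
  refine monotone_nat_of_le_succ fun j => ?_
  apply Finset.card_le_card_of_injOn (fun i => if i + jacoF i = j then j else i)
  · intro x hx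
    simp only [Finset.mem_coe, Finset.mem_filter, Finset.mem_Ico] at hx ⊢
    have := one_le_jacoF (show 1 ≤ j by omega)
    split_ifs <;> omega
  · intro a ha b hb hab
    simp only [Finset.mem_coe, Finset.mem_filter, Finset.mem_Ico] at ha hb
    dsimp only at hab
    split_ifs at hab with h₁ h₂ h₂
    · exact strictMono_add_jacoF.injective (h₁.trans h₂.symm)
    all_goals omega

lemma jacoDeg_eq_min (n j : ℕ) : jacoDeg n j = min j (jacoDin j + (n - j)) := by
  have hout : (Finset.Ioc j n).filter (fun k => k ≤ j + jacoF j)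
      = Finset.Ioc j (min n (j + jacoF j)) := by
    ext k
    simp only [Finset.mem_filter, Finset.mem_Ioc, le_min_iff]
    omega
  have := jacoF_add_jacoDin j
  rw [jacoDeg, hout, Nat.card_Ioc]
  omega

lemma abs_jacoDeg_succ_sub_le (n j : ℕ) :
    |(jacoDeg n (j + 1) : ℤ) - jacoDeg n j| ≤ 1 := by
  have := jacoDin_mono (Nat.le_add_right j 1)
  have := jacoDin_succ_le j
  rw [jacoDeg_eq_min, jacoDeg_eq_min, abs_le]
  push_cast
  omega

theorem stmt_1_general (n i : ℕ) :
    |(jacoDeg n i : ℤ) - (jacoDeg n (i - 1) : ℤ)| ≤ 1 := by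
  cases i with
  | zero => simp
  | succ j => exact abs_jacoDeg_succ_sub_le n j

/-- Degrees of consecutive vertices in the underlying undirected graph of `J_n(1)`
differ by at most one. -/
theorem stmt_1 (n i : ℕ) (hn : 2 ≤ n) (hi : 2 ≤ i) (hin : i ≤ n) :
    |(jacoDeg n i : ℤ) - (jacoDeg n (i - 1) : ℤ)| ≤ 1 :=
  stmt_1_general n i
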